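/- Under Assumption (A1), let x₀ ∈ ℝ and for δ > 0 let x^δ : [0,∞) → ℝ satisfy x^δ(t) = x₀ + ∫₀ᵗ (f(x^δ(s)) + κ(x^δ(π_δ(s)))) ds for all t ≥ 0. Then for every integer p ≥ 1 there exists a constant C > 0, independent of t and δ, such that |x^δ(π_δ(t)) − x^δ(t)|^p ≤ C·δ^p for all t ≥ 0 and all δ > 0. -/

import Mathlib

/-!
Outside the ball of radius `R = (|f 0| + γ) / λ` the closed-loop vector field points inward, by
dissipativity of `f` and boundedness of `κ`; hence `|x^δ| ≤ max |x₀| R` for every `δ`. On that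
ball `f` is bounded, so the integrand is bounded by a constant `M` independent of `δ`, and
`|x^δ(π_δ t) - x^δ(t)| ≤ M (t - π_δ t) ≤ M δ`.

The integral equation does not assert that its integrand is integrable, and a non-integrable
Bochner integral is `0`. So one also has to rule out a first time `T` beyond which integrability
fails: up to `T` the trajectory is continuous and bounded, and after `T` it is constantly `x₀`,
so the integrand is integrable past `T` after all.
-/

/-- The sampling map `π_δ(t) = δ·⌊t/δ⌋`. -/
noncomputable def piD (δ t : ℝ) : ℝ := δ * (⌊t / δ⌋ : ℤ)

open MeasureTheory Set Filter Topology

lemma piD_le {δ : ℝ} (hδ : 0 < δ) (t : ℝ) : piD δ t ≤ t := by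
  have h := mul_le_mul_of_nonneg_left (Int.floor_le (t / δ)) hδ.le
  rwa [mul_div_cancel₀ _ hδ.ne'] at h

lemma sub_piD_le {δ : ℝ} (hδ : 0 < δ) (t : ℝ) : t - piD δ t ≤ δ := by
  have h := mul_lt_mul_of_pos_left (Int.sub_one_lt_floor (t / δ)) hδ
  rw [mul_sub, mul_div_cancel₀ _ hδ.ne', mul_one] at h
  unfold piD
  linarith

lemma piD_nonneg {δ t : ℝ} (hδ : 0 < δ) (ht : 0 ≤ t) : 0 ≤ piD δ t :=
  mul_nonneg hδ.le (Int.cast_nonneg_iff.mpr (Int.floor_nonneg.mpr (div_nonneg ht hδ.le)))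

lemma measurable_comp_piD {β : Type*} [MeasurableSpace β] (φ : ℝ → β) (δ : ℝ) :
    Measurable fun s => φ (piD δ s) :=
  (measurable_from_top (f := fun i : ℤ => φ (δ * i))).comp
    (Int.measurable_floor.comp (measurable_id.div_const δ))

lemma intervalIntegrable_comp_piD {φ : ℝ → ℝ} {C : ℝ} (hφ : ∀ y, ‖φ y‖ ≤ C) (δ a b : ℝ) :
    IntervalIntegrable (fun s => φ (piD δ s)) volume a b :=
  (intervalIntegrable_const (c := C)).mono_fun'
    (measurable_comp_piD φ δ).aestronglyMeasurable (ae_of_all _ fun _ => hφ _)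

lemma continuous_of_abs_sub_le_mul {f : ℝ → ℝ} {L : ℝ → ℝ → ℝ}
    (hL : ∀ b, ContinuousAt (fun a => L a b) b) (hf : ∀ a b, |f a - f b| ≤ L a b * |a - b|) :
    Continuous f := by
  refine continuous_iff_continuousAt.mpr fun b => tendsto_iff_norm_sub_tendsto_zero.mpr ?_
  have hbound : Tendsto (fun a => L a b * |a - b|) (𝓝 b) (𝓝 0) := by
    have hdist : Tendsto (fun a => |a - b|) (𝓝 b) (𝓝 0) := by
      simpa using ((continuous_id.sub continuous_const).abs.tendsto b : Tendsto _ _ (𝓝 |b - b|))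
    simpa using (hL b).tendsto.mul hdist
  exact squeeze_zero (fun _ => norm_nonneg _) (fun a => hf a b) hbound

lemma mul_add_nonpos_of_dissipative {f : ℝ → ℝ} {lam γ u y : ℝ} (hlam : 0 < lam)
    (hdiss : y * (f y - f 0) ≤ -lam * y ^ 2) (hu : |u| ≤ γ) (hy : (|f 0| + γ) / lam < |y|) :
    y * (f y + u) ≤ 0 := by
  rw [div_lt_iff₀ hlam] at hy
  have hyu : y * (f 0 + u) ≤ |y| * (|f 0| + γ) := by
    calc y * (f 0 + u) ≤ |y * (f 0 + u)| := le_abs_self _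
      _ ≤ |y| * (|f 0| + γ) := by
        rw [abs_mul]
        exact mul_le_mul_of_nonneg_left ((abs_add_le _ _).trans (by linarith)) (abs_nonneg _)
  nlinarith [sq_abs y, abs_nonneg y]

lemma ContinuousOn.le_of_le_of_decreases_above {x : ℝ → ℝ} {a b B : ℝ}
    (hx : ContinuousOn x (Icc a b)) (hab : a ≤ b) (ha : x a ≤ B)
    (hdec : ∀ w ∈ Icc a b, (∀ s ∈ Ioc w b, B < x s) → x b ≤ x w) : x b ≤ B := by
  set K := Icc a b ∩ x ⁻¹' Iic B
  have hbdd : BddAbove K := ⟨b, fun s hs => hs.1.2⟩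
  have hw : sSup K ∈ K :=
    (hx.preimage_isClosed_of_isClosed isClosed_Icc isClosed_Iic).csSup_mem
      ⟨a, left_mem_Icc.mpr hab, ha⟩ hbdd
  refine (hdec _ hw.1 fun s hs => ?_).trans hw.2
  by_contra! h
  exact hs.1.not_ge (le_csSup hbdd ⟨⟨hw.1.1.trans hs.1.le, hs.2⟩, h⟩)

section IntegralEquation

variable {x g : ℝ → ℝ} {x₀ : ℝ}

lemma sub_eq_integral_of_integral_eq (hx : ∀ t, 0 ≤ t → x t = x₀ + ∫ s in (0:ℝ)..t, g s)
    {a b : ℝ} (ha : 0 ≤ a) (hab : a ≤ b) (hg : IntervalIntegrable g volume 0 b) :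
    x b - x a = ∫ s in a..b, g s := by
  have hga : IntervalIntegrable g volume 0 a :=
    hg.mono_set (uIcc_subset_uIcc_left (by rw [uIcc_of_le (ha.trans hab)]; exact ⟨ha, hab⟩))
  rw [hx b (ha.trans hab), hx a ha, ← intervalIntegral.integral_interval_sub_left hg hga]
  ring

lemma continuousOn_Icc_of_integral_eq (hx : ∀ t, 0 ≤ t → x t = x₀ + ∫ s in (0:ℝ)..t, g s)
    {r : ℝ} (hr : 0 ≤ r) (hg : IntervalIntegrable g volume 0 r) : ContinuousOn x (Icc 0 r) := by
  have hprim := intervalIntegral.continuousOn_primitive_interval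
    ((intervalIntegrable_iff_integrableOn_Icc_of_le hr).mp hg |>.mono_set (uIcc_of_le hr).le)
  rw [uIcc_of_le hr] at hprim
  exact (continuousOn_const.add hprim).congr fun s hs => hx s hs.1

lemma abs_sub_le_mul_of_integral_eq (hx : ∀ t, 0 ≤ t → x t = x₀ + ∫ s in (0:ℝ)..t, g s)
    {a b M : ℝ} (ha : 0 ≤ a) (hab : a ≤ b) (hg : IntervalIntegrable g volume 0 b)
    (hM : ∀ s, 0 ≤ s → |g s| ≤ M) : |x b - x a| ≤ M * (b - a) := by
  rw [sub_eq_integral_of_integral_eq hx ha hab hg, ← abs_of_nonneg (sub_nonneg.mpr hab)]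
  have hMab : ∀ s ∈ uIoc a b, ‖g s‖ ≤ M := fun s hs => by
    rw [uIoc_of_le hab] at hs
    exact hM s (ha.trans hs.1.le)
  exact intervalIntegral.norm_integral_le_of_norm_le_const hMab

lemma le_max_of_integral_eq (hx : ∀ t, 0 ≤ t → x t = x₀ + ∫ s in (0:ℝ)..t, g s) {R t : ℝ}
    (ht : 0 ≤ t) (hg : IntervalIntegrable g volume 0 t)
    (hR : ∀ s, 0 ≤ s → R < x s → g s ≤ 0) : x t ≤ max x₀ R := by
  refine (continuousOn_Icc_of_integral_eq hx ht hg).le_of_le_of_decreases_above ht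
    (by rw [hx 0 le_rfl, intervalIntegral.integral_same, add_zero]; exact le_max_left _ _)
    fun w hw habove => ?_
  have hgw : IntervalIntegrable g volume w t :=
    hg.mono_set (uIcc_subset_uIcc (by rw [uIcc_of_le ht]; exact hw) right_mem_uIcc)
  have hnonpos : ∫ s in w..t, g s ≤ ∫ _ in w..t, (0:ℝ) :=
    intervalIntegral.integral_mono_on_of_le_Ioo hw.2 hgw intervalIntegrable_const fun s hs =>
      hR s (hw.1.trans hs.1.le) ((le_max_right _ _).trans_lt (habove s (Ioo_subset_Ioc_self hs)))
  rw [intervalIntegral.integral_zero] at hnonpos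
  linarith [sub_eq_integral_of_integral_eq hx hw.1 hw.2 hg]

lemma abs_le_max_of_integral_eq (hx : ∀ t, 0 ≤ t → x t = x₀ + ∫ s in (0:ℝ)..t, g s) {R : ℝ}
    (hR0 : 0 ≤ R) (hR : ∀ s, 0 ≤ s → R < |x s| → x s * g s ≤ 0) (t : ℝ) (ht : 0 ≤ t) :
    |x t| ≤ max |x₀| R := by
  by_cases hg : IntervalIntegrable g volume 0 t
  swap
  · rw [hx t ht, intervalIntegral.integral_undef hg, add_zero]
    exact le_max_left _ _
  have hx' : ∀ t, 0 ≤ t → -x t = -x₀ + ∫ s in (0:ℝ)..t, -g s := fun t ht => by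
    rw [intervalIntegral.integral_neg, hx t ht]; ring
  have hupper := le_max_of_integral_eq hx ht hg fun s hs hRs => by
    nlinarith [hR s hs (hRs.trans_le (le_abs_self _))]
  have hlower := le_max_of_integral_eq hx' ht hg.neg fun s hs hRs => by
    nlinarith [hR s hs (hRs.trans_le (neg_le_abs _))]
  exact abs_le.mpr ⟨by linarith [max_le_max_right R (neg_le_abs x₀)],
    hupper.trans (max_le_max_right R (le_abs_self x₀))⟩

end IntegralEquation

section ClosedLoop

variable {φ v x : ℝ → ℝ} {x₀ M : ℝ}

lemma intervalIntegrable_of_forall_lt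
    (hx : ∀ t, 0 ≤ t → x t = x₀ + ∫ s in (0:ℝ)..t, (φ (x s) + v s)) (hφ : Continuous φ)
    (hM : ∀ s, 0 ≤ s → ‖φ (x s)‖ ≤ M) {T : ℝ} (hT : 0 ≤ T) (hv : IntervalIntegrable v volume 0 T)
    (hlt : ∀ r ∈ Ico 0 T, IntervalIntegrable (fun s => φ (x s) + v s) volume 0 r) :
    IntervalIntegrable (fun s => φ (x s) + v s) volume 0 T := by
  have hcont : ContinuousOn x (Ioo 0 T) := fun s hs => by
    obtain ⟨r, hsr, hrT⟩ := exists_between hs.2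
    have hr : 0 ≤ r := hs.1.le.trans hsr.le
    exact ((continuousOn_Icc_of_integral_eq hx hr (hlt r ⟨hr, hrT⟩)).continuousAt
      (Icc_mem_nhds hs.1 hsr)).continuousWithinAt
  refine IntervalIntegrable.add ?_ hv
  rw [intervalIntegrable_iff_integrableOn_Ioo_of_le hT]
  exact .of_bound measure_Ioo_lt_top
    ((hφ.comp_continuousOn hcont).aestronglyMeasurable measurableSet_Ioo) M
    (ae_restrict_of_forall_mem measurableSet_Ioo fun s hs => hM s hs.1.le)

lemma intervalIntegrable_of_integral_eq
    (hx : ∀ t, 0 ≤ t → x t = x₀ + ∫ s in (0:ℝ)..t, (φ (x s) + v s)) (hφ : Continuous φ)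
    (hM : ∀ s, 0 ≤ s → ‖φ (x s)‖ ≤ M) (hv : ∀ a b, IntervalIntegrable v volume a b) (r : ℝ)
    (hr : 0 ≤ r) : IntervalIntegrable (fun s => φ (x s) + v s) volume 0 r := by
  set g := fun s => φ (x s) + v s
  by_contra hbad
  set S := {u | 0 ≤ u ∧ ¬IntervalIntegrable g volume 0 u}
  have hS : S.Nonempty := ⟨r, hr, hbad⟩
  set T := sInf S
  have hSbdd : BddBelow S := ⟨0, fun _ h => h.1⟩
  have hT : 0 ≤ T := le_csInf hS fun _ h => h.1
  have hgT : IntervalIntegrable g volume 0 T :=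
    intervalIntegrable_of_forall_lt hx hφ hM hT (hv 0 T) fun u hu => by
      by_contra h
      exact (csInf_le hSbdd ⟨hu.1, h⟩).not_gt hu.2
  have hafter : ∀ s, T < s → ¬IntervalIntegrable g volume 0 s := fun s hTs hs => by
    obtain ⟨u, ⟨hu0, hu⟩, hus⟩ := exists_lt_of_csInf_lt hS hTs
    exact hu (hs.mono_set (uIcc_subset_uIcc_left (by
      rw [uIcc_of_le (hu0.trans hus.le)]; exact ⟨hu0, hus.le⟩)))
  -- beyond `T` the integral in the equation is the junk value `0`, so `x` is frozen at `x₀`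
  have hfrozen : IntervalIntegrable g volume T (T + 1) := by
    refine ((intervalIntegrable_const (c := φ x₀)).add (hv T (T + 1))).congr fun s hs => ?_
    rw [uIoc_of_le (by linarith)] at hs
    simp only [g, hx s (hT.trans hs.1.le), intervalIntegral.integral_undef (hafter s hs.1),
      add_zero]
  exact hafter (T + 1) (by linarith) (hgT.trans hfrozen)

end ClosedLoop

theorem stmt14_general
    (f κ : ℝ → ℝ) (x₀ : ℝ)
    -- Assumption (A1)
    (lam ξ μ γ : ℝ) (q : ℕ)
    (hlam : 0 < lam)
    (hcontr : ∀ a b : ℝ, (a - b) * (f a - f b) ≤ -lam * (a - b) ^ 2)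
    (hfLip : ∀ a b : ℝ, |f a - f b| ≤ (ξ * (|a| ^ q + |b| ^ q) + μ) * |a - b|)
    (hκbd : ∀ a : ℝ, |κ a| ≤ γ)
    -- the sampled-data closed-loop system
    (xd : ℝ → ℝ → ℝ)
    (hxd : ∀ δ : ℝ, 0 < δ → ∀ t : ℝ, 0 ≤ t →
      xd δ t = x₀ + ∫ s in (0:ℝ)..t, (f (xd δ s) + κ (xd δ (piD δ s))))
    :
    ∀ p : ℕ, 1 ≤ p → ∃ C : ℝ, 0 < C ∧
      ∀ t : ℝ, 0 ≤ t → ∀ δ : ℝ, 0 < δ →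
        |xd δ (piD δ t) - xd δ t| ^ p ≤ C * δ ^ p := by
  intro p _
  have hγ : 0 ≤ γ := (abs_nonneg _).trans (hκbd 0)
  set R := (|f 0| + γ) / lam
  have hfc : Continuous f := continuous_of_abs_sub_le_mul (by fun_prop) hfLip
  obtain ⟨Mf, hMf⟩ := isCompact_Icc.exists_bound_of_continuousOn
    (hfc.continuousOn (s := Icc (-max |x₀| R) (max |x₀| R)))
  set M := |Mf| + γ + 1
  have hM : 0 < M := by positivity
  refine ⟨M ^ p, pow_pos hM p, fun t ht δ hδ => ?_⟩
  have hbd : ∀ s, 0 ≤ s → |xd δ s| ≤ max |x₀| R :=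
    abs_le_max_of_integral_eq (hxd δ hδ) (by positivity) fun s _ hs =>
      mul_add_nonpos_of_dissipative hlam (by simpa using hcontr (xd δ s) 0) (hκbd _) hs
  have hfx : ∀ s, 0 ≤ s → |f (xd δ s)| ≤ Mf := fun s hs => hMf _ (abs_le.mp (hbd s hs))
  have hint := intervalIntegrable_of_integral_eq (hxd δ hδ) hfc hfx
    (intervalIntegrable_comp_piD (fun y => hκbd (xd δ y)) δ) t ht
  have hg : ∀ s, 0 ≤ s → |f (xd δ s) + κ (xd δ (piD δ s))| ≤ M := fun s hs =>
    (abs_add_le _ _).trans (by linarith [hfx s hs, hκbd (xd δ (piD δ s)), le_abs_self Mf])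
  have hinc :=
    abs_sub_le_mul_of_integral_eq (hxd δ hδ) (piD_nonneg hδ ht) (piD_le hδ t) hint hg
  calc |xd δ (piD δ t) - xd δ t| ^ p ≤ (M * δ) ^ p := by
        rw [abs_sub_comm]
        exact pow_le_pow_left₀ (abs_nonneg _)
          (hinc.trans (mul_le_mul_of_nonneg_left (sub_piD_le hδ t) hM.le)) p
    _ = M ^ p * δ ^ p := mul_pow _ _ _

/-- Under Assumption (A1), the increment of the sampled-data closed-loop
trajectory over a sampling interval satisfies `|x^δ(π_δ(t)) − x^δ(t)|^p ≤ C·δ^p`,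
uniformly in `t ≥ 0` and `δ > 0`. -/
theorem stmt14
    (f κ : ℝ → ℝ) (x₀ : ℝ)
    -- Assumption (A1)
    (lam ξ μ Lκ γ : ℝ) (q : ℕ)
    (hlam : 0 < lam) (hξ : 0 < ξ) (hμ : 0 < μ) (hLκ : 0 < Lκ) (hγ : 0 < γ)
    (hcontr : ∀ a b : ℝ, (a - b) * (f a - f b) ≤ -lam * (a - b) ^ 2)
    (hfLip : ∀ a b : ℝ, |f a - f b| ≤ (ξ * (|a| ^ q + |b| ^ q) + μ) * |a - b|)
    (hκLip : ∀ a b : ℝ, |κ a - κ b| ≤ Lκ * |a - b|)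
    (hgap : lam / 2 - Lκ > 0)
    (hκbd : ∀ a : ℝ, |κ a| ≤ γ)
    -- the sampled-data closed-loop system
    (xd : ℝ → ℝ → ℝ)
    (hxd : ∀ δ : ℝ, 0 < δ → ∀ t : ℝ, 0 ≤ t →
      xd δ t = x₀ + ∫ s in (0:ℝ)..t, (f (xd δ s) + κ (xd δ (piD δ s))))
    :
    ∀ p : ℕ, 1 ≤ p → ∃ C : ℝ, 0 < C ∧
      ∀ t : ℝ, 0 ≤ t → ∀ δ : ℝ, 0 < δ →
        |xd δ (piD δ t) - xd δ t| ^ p ≤ C * δ ^ p :=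
  stmt14_general f κ x₀ lam ξ μ γ q hlam hcontr hfLip hκbd xd hxd
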